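/- arXiv:1802.03381 — 6 statements merged into one kernel-verified Lean document; each statement's English description precedes it below -/
import Mathlib

section
/- Let (Σ, →) be a terminating state transition system and ≈ an equivalence relation on Σ. Then (Σ, →) is confluent modulo ≈ (i.e., for all σ₁ ≈ σ₁', σ₁ →* σ₂ and σ₁' →* σ₂' imply there exist σ₃, σ₃' with σ₂ →* σ₃, σ₂' →* σ₃' and σ₃ ≈ σ₃') if and only if it is locally confluent modulo ≈ (i.e., it satisfies the α property: σ → τ and σ → τ' imply τ ↓≈ τ'; and the β property: σ → τ and σ ≈ τ' imply τ ↓≈ τ'). -/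
/-! Under local confluence modulo `≈`, joinability modulo `≈` is transitive through every
state `x`, by well-founded induction along `→`. Suppose `u ↓ x` and `x ↓ w`. If neither join
reduces `x`, transitivity of `≈` joins `u` and `w`. Otherwise one of them starts with a step
`x → x'`; the β property (if the other join does not reduce `x`) or the α property and the
induction hypothesis (if it starts with `x → x''`) make `u` and `w` both joinable with `x'`,
and induction at `x'` applies. Confluence modulo `≈` is this transitivity along
`s₂ ↓ s₁ ≈ s₁' ↓ s₂'`. -/

/-- Joinability modulo an equivalence relation. -/
def JoinableMod {S : Type*} (R : S → S → Prop) (E : S → S → Prop) (a b : S) : Prop :=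
  ∃ c c', Relation.ReflTransGen R a c ∧ Relation.ReflTransGen R b c' ∧ E c c'

/-- Confluence modulo an equivalence relation. -/
def ConfluentMod {S : Type*} (R : S → S → Prop) (E : S → S → Prop) : Prop :=
  ∀ s1 s1' s2 s2', E s1 s1' → Relation.ReflTransGen R s1 s2 →
    Relation.ReflTransGen R s1' s2' → JoinableMod R E s2 s2'

/-- Local confluence modulo an equivalence: α and β properties. -/
def LocallyConfluentMod {S : Type*} (R : S → S → Prop) (E : S → S → Prop) : Prop :=
  (∀ s t t', R s t → R s t' → JoinableMod R E t t') ∧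
  (∀ s t t', R s t → E s t' → JoinableMod R E t t')

open Relation

section

variable {S : Type*} {R E : S → S → Prop}

namespace JoinableMod

variable {a b c : S}

theorem of_rel (h : E a b) : JoinableMod R E a b :=
  ⟨a, b, .refl, .refl, h⟩

theorem of_reflTransGen (hE : ∀ a, E a a) (h : ReflTransGen R a b) : JoinableMod R E a b :=
  ⟨b, b, h, .refl, hE b⟩

theorem symm (hE : ∀ {a b}, E a b → E b a) (h : JoinableMod R E a b) : JoinableMod R E b a := by
  obtain ⟨c, c', hac, hbc', hcc'⟩ := h
  exact ⟨c', c, hbc', hac, hE hcc'⟩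

theorem head (hab : ReflTransGen R a b) (h : JoinableMod R E b c) : JoinableMod R E a c := by
  obtain ⟨d, d', hbd, hcd', hdd'⟩ := h
  exact ⟨d, d', hab.trans hbd, hcd', hdd'⟩

theorem cases_right (h : JoinableMod R E a b) :
    (∃ c, ReflTransGen R a c ∧ E c b) ∨ ∃ b', R b b' ∧ JoinableMod R E a b' := by
  obtain ⟨c, c', hac, hbc', hcc'⟩ := h
  rcases hbc'.cases_head with rfl | ⟨b', hbb', hb'c'⟩
  · exact .inl ⟨c, hac, hcc'⟩
  · exact .inr ⟨b', hbb', c, c', hac, hb'c', hcc'⟩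

end JoinableMod

theorem ConfluentMod.locallyConfluentMod (hE : ∀ a, E a a) (h : ConfluentMod R E) :
    LocallyConfluentMod R E :=
  ⟨fun s _ _ hst hst' => h s s _ _ (hE s) (.single hst) (.single hst'),
    fun _ _ t' hst hst' => h _ t' _ t' hst' (.single hst) .refl⟩

namespace LocallyConfluentMod

theorem joinableMod_trans (h : LocallyConfluentMod R E) (hE : Equivalence E)
    (hterm : WellFounded (fun a b => R b a)) {u x w : S}
    (hu : JoinableMod R E u x) (hw : JoinableMod R E x w) : JoinableMod R E u w := by
  obtain ⟨hα, hβ⟩ := h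
  induction x using hterm.induction generalizing u w with
  | _ x ih =>
  rcases hu.cases_right with ⟨a, hua, hax⟩ | ⟨x₁, hxx₁, hux₁⟩ <;>
    rcases (hw.symm hE.symm).cases_right with ⟨c, hwc, hcx⟩ | ⟨x₂, hxx₂, hwx₂⟩
  · exact ⟨a, c, hua, hwc, hE.trans hax (hE.symm hcx)⟩
  · have hux₂ : JoinableMod R E u x₂ := ((hβ x x₂ a hxx₂ (hE.symm hax)).symm hE.symm).head hua
    exact ih x₂ hxx₂ hux₂ (hwx₂.symm hE.symm)
  · have hwx₁ : JoinableMod R E w x₁ := ((hβ x x₁ c hxx₁ (hE.symm hcx)).symm hE.symm).head hwc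
    exact ih x₁ hxx₁ hux₁ (hwx₁.symm hE.symm)
  · exact ih x₂ hxx₂ (ih x₁ hxx₁ hux₁ (hα x x₁ x₂ hxx₁ hxx₂)) (hwx₂.symm hE.symm)

theorem confluentMod (h : LocallyConfluentMod R E) (hE : Equivalence E)
    (hterm : WellFounded (fun a b => R b a)) : ConfluentMod R E := by
  intro s₁ s₁' s₂ s₂' hs₁ hs₂ hs₂'
  have hs₂s₁ : JoinableMod R E s₂ s₁ :=
    (JoinableMod.of_reflTransGen hE.refl hs₂).symm hE.symm
  exact h.joinableMod_trans hE hterm (h.joinableMod_trans hE hterm hs₂s₁ (.of_rel hs₁))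
    (.of_reflTransGen hE.refl hs₂')

end LocallyConfluentMod

end

theorem huet_confluence_modulo_equivalence {S : Type*} (R : S → S → Prop) (E : S → S → Prop)
    (hE : Equivalence E) (hterm : WellFounded (fun a b => R b a)) :
    ConfluentMod R E ↔ LocallyConfluentMod R E :=
  ⟨fun h => h.locallyConfluentMod hE.refl, fun h => h.confluentMod hE hterm⟩
end

section
/- Define an equivalence relation ≈ on finite multisets of constraints, where constraints are either item(a) for a : α or mset(L) for L : List α, as the smallest equivalence such that: (i) multisets with no mset constraints are equivalent iff they are equal, and (ii) if L₁ is a permutation of L₂ and G₁ ≈ G₂ then ({mset L₁} + G₁) ≈ ({mset L₂} + G₂). Then ≈ is a congruence with respect to multiset union: G₁ ≈ G₁' and G₂ ≈ G₂' imply G₁ + G₂ ≈ G₁' + G₂'. -/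
inductive C (α : Type*) where
  | item : α → C α
  | mset : List α → C α

def C.isMset {α : Type*} : C α → Bool
  | .mset _ => true
  | .item _ => false

/-- The multi-set equivalence: smallest equivalence with mset-free multisets
equivalent iff equal, and `{mset L₁} + G₁ ≈ {mset L₂} + G₂` whenever `L₁ ~ L₂`
and `G₁ ≈ G₂`. -/
inductive MEquiv {α : Type*} : Multiset (C α) → Multiset (C α) → Prop
  | base (G : Multiset (C α)) (h : ∀ c ∈ G, c.isMset = false) : MEquiv G G
  | step (L₁ L₂ : List α) (G₁ G₂ : Multiset (C α)) (hperm : L₁.Perm L₂)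
      (h : MEquiv G₁ G₂) : MEquiv ({C.mset L₁} + G₁) ({C.mset L₂} + G₂)
  | symm {G H : Multiset (C α)} : MEquiv G H → MEquiv H G
  | trans {G H K : Multiset (C α)} : MEquiv G H → MEquiv H K → MEquiv G K

/-! Appending a fixed multiset on the right commutes with every constructor of `MEquiv`, except
that the base case `G ≈ G` becomes `G + K ≈ G + K` with `K` arbitrary. So the real work is
reflexivity, which is not a constructor: `item` constraints are carried into the base case, and
`mset` constraints are peeled off by `step` with the trivial permutation. -/

namespace MEquiv

variable {α : Type*}

theorem singleton_item_add (a : α) {G H : Multiset (C α)} (h : MEquiv G H) :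
    MEquiv ({C.item a} + G) ({C.item a} + H) := by
  induction h with
  | base G hG => exact base _ (by simpa [C.isMset] using hG)
  | step L₁ L₂ G₁ G₂ hperm _ ih =>
    rw [add_left_comm _ {C.mset L₁}, add_left_comm _ {C.mset L₂}]
    exact step _ _ _ _ hperm ih
  | symm _ ih => exact ih.symm
  | trans _ _ ih₁ ih₂ => exact ih₁.trans ih₂

protected theorem refl (G : Multiset (C α)) : MEquiv G G := by
  induction G using Multiset.induction with
  | empty => exact base 0 (by simp)
  | cons c G ih =>
    rw [← Multiset.singleton_add]
    cases c with
    | item a => exact singleton_item_add a ih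
    | mset L => exact step _ _ _ _ (List.Perm.refl L) ih

theorem add_right {G H : Multiset (C α)} (K : Multiset (C α)) (h : MEquiv G H) :
    MEquiv (G + K) (H + K) := by
  induction h with
  | base G _ => exact MEquiv.refl _
  | step L₁ L₂ G₁ G₂ hperm _ ih =>
    rw [add_assoc, add_assoc]
    exact step _ _ _ _ hperm ih
  | symm _ ih => exact ih.symm
  | trans _ _ ih₁ ih₂ => exact ih₁.trans ih₂

theorem add_left (K : Multiset (C α)) {G H : Multiset (C α)} (h : MEquiv G H) :
    MEquiv (K + G) (K + H) := by
  simpa only [add_comm K] using h.add_right K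

end MEquiv

theorem mequiv_congruence {α : Type*} (G₁ G₁' G₂ G₂' : Multiset (C α))
    (h1 : MEquiv G₁ G₁') (h2 : MEquiv G₂ G₂') :
    MEquiv (G₁ + G₂) (G₁' + G₂') :=
  (h1.add_right G₂).trans (h2.add_left G₁')
end

section
/- With the multiset equivalence ≈ from the multi-set items example (the smallest equivalence on multisets of constraints relating {mset L₁} + G₁ to {mset L₂} + G₂ whenever L₁ is a permutation of L₂ and G₁ ≈ G₂, and being equality on mset-free multisets), ≈ has the split property with respect to multiset union: if G ≈ H and G = G₁ + G₂, then there exist H₁, H₂ with H = H₁ + H₂, G₁ ≈ H₁ and G₂ ≈ H₂. -/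
/-!
A constraint is determined up to `≈` by its key in `α ⊕ Multiset α`, which forgets the order of
the list inside an `mset`. So `G ≈ H` holds exactly when `G` and `H` have the same multiset of
keys, and a splitting of the keys of `G` lifts along the key map to a splitting of `H`.
-/

namespace Multiset

variable {α β : Type*}

theorem rel_eq_on_iff_map_eq (f : α → β) {s t : Multiset α} :
    Rel (fun a b => f a = f b) s t ↔ s.map f = t.map f := by
  rw [← rel_eq, rel_map]

theorem exists_add_of_map_eq_add {f : α → β} {s : Multiset α} {t₁ t₂ : Multiset β}
    (h : s.map f = t₁ + t₂) : ∃ s₁ s₂, s = s₁ + s₂ ∧ s₁.map f = t₁ ∧ s₂.map f = t₂ := by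
  rw [← rel_eq, rel_map_left, rel_add_right] at h
  obtain ⟨s₁, s₂, h₁, h₂, rfl⟩ := h
  rw [← rel_map_left, rel_eq] at h₁ h₂
  exact ⟨s₁, s₂, rfl, h₁, h₂⟩

end Multiset

def C.key {α : Type*} : C α → α ⊕ Multiset α
  | .item a => .inl a
  | .mset L => .inr L

namespace MEquiv

variable {α : Type*} {G H : Multiset (C α)}

theorem mset_cons {L₁ L₂ : List α} (hperm : L₁.Perm L₂) (h : MEquiv G H) :
    MEquiv (C.mset L₁ ::ₘ G) (C.mset L₂ ::ₘ H) := by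
  simpa only [Multiset.singleton_add] using step L₁ L₂ G H hperm h

theorem item_cons (a : α) (h : MEquiv G H) : MEquiv (C.item a ::ₘ G) (C.item a ::ₘ H) := by
  induction h with
  | base G hG =>
    refine base _ fun c hc => ?_
    rcases Multiset.mem_cons.1 hc with rfl | hc
    exacts [rfl, hG c hc]
  | step L₁ L₂ G₁ G₂ hperm _ ih =>
    simpa only [Multiset.singleton_add, Multiset.cons_swap (C.item a)] using mset_cons hperm ih
  | symm _ ih => exact ih.symm
  | trans _ _ ih₁ ih₂ => exact ih₁.trans ih₂

theorem map_key_eq (h : MEquiv G H) : G.map C.key = H.map C.key := by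
  induction h with
  | base => rfl
  | step L₁ L₂ G₁ G₂ hperm _ ih =>
    simp only [Multiset.map_add, Multiset.map_singleton, ih, C.key, Multiset.coe_eq_coe.2 hperm]
  | symm _ ih => exact ih.symm
  | trans _ _ ih₁ ih₂ => exact ih₁.trans ih₂

theorem of_map_key_eq (h : G.map C.key = H.map C.key) : MEquiv G H := by
  rw [← Multiset.rel_eq_on_iff_map_eq] at h
  induction h with
  | zero => exact base 0 (by simp)
  | @cons c d _ _ hcd _ ih =>
    cases c <;> cases d <;> simp only [C.key, Sum.inl.injEq, Sum.inr.injEq, reduceCtorEq,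
      Multiset.coe_eq_coe] at hcd
    · exact hcd ▸ item_cons _ ih
    · exact mset_cons hcd ih

theorem iff_map_key_eq : MEquiv G H ↔ G.map C.key = H.map C.key :=
  ⟨map_key_eq, of_map_key_eq⟩

end MEquiv

theorem mequiv_split {α : Type*} (G H G₁ G₂ : Multiset (C α))
    (h : MEquiv G H) (hsplit : G = G₁ + G₂) :
    ∃ H₁ H₂, H = H₁ + H₂ ∧ MEquiv G₁ H₁ ∧ MEquiv G₂ H₂ := by
  rw [MEquiv.iff_map_key_eq, hsplit, Multiset.map_add] at h
  obtain ⟨H₁, H₂, rfl, h₁, h₂⟩ := Multiset.exists_add_of_map_eq_add h.symm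
  exact ⟨H₁, H₂, rfl, .of_map_key_eq h₁.symm, .of_map_key_eq h₂.symm⟩
end

section
/- For the multi-set items rewrite relation → on states satisfying the invariant S (at most one mset constraint), the α property modulo the permutation equivalence ≈ holds: if σ → τ and σ → τ', then τ ↓≈ τ'. Concretely, the only critical overlap {item a, item b, mset L} yields the pair ({item b, mset (a::L)}, {item a, mset (b::L)}), which rewrite respectively to {mset (b::a::L)} and {mset (a::b::L)}, and these are ≈-equivalent since b::a::L is a permutation of a::b::L. -/
/-- The multi-set items rewrite relation:
`{mset L, item a} + G → {mset (a :: L)} + G`. -/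
inductive Step {α : Type*} : Multiset (C α) → Multiset (C α) → Prop
  | rule (L : List α) (a : α) (G : Multiset (C α)) :
      Step ({C.mset L, C.item a} + G) ({C.mset (a :: L)} + G)

def SInv {α : Type*} (σ : Multiset (C α)) : Prop :=
  Multiset.countP (fun c => c.isMset = true) σ ≤ 1

section MultisetItems

variable {α : Type*}

theorem step_iff {σ τ : Multiset (C α)} :
    Step σ τ ↔ ∃ L a G, σ = C.mset L ::ₘ C.item a ::ₘ G ∧ τ = C.mset (a :: L) ::ₘ G := by
  constructor
  · rintro ⟨L, a, G⟩
    exact ⟨L, a, G, by simp, by simp⟩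
  · rintro ⟨L, a, G, rfl, rfl⟩
    simpa using Step.rule L a G

theorem sInv_mset_cons_iff {L : List α} {G : Multiset (C α)} :
    SInv (C.mset L ::ₘ G) ↔ ∀ c ∈ G, c.isMset = false := by
  rw [SInv, Multiset.countP_cons_of_pos (p := fun c => c.isMset = true) G rfl,
    add_le_iff_nonpos_left, nonpos_iff_eq_zero, Multiset.countP_eq_zero]
  simp

theorem mset_cons_inj_of_forall_isMset_eq_false {L L' : List α} {G G' : Multiset (C α)}
    (h : C.mset L ::ₘ G = C.mset L' ::ₘ G') (hG : ∀ c ∈ G, c.isMset = false) :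
    L = L' ∧ G = G' := by
  rcases Multiset.cons_eq_cons.mp h with ⟨hL, hGG⟩ | ⟨-, H, rfl, -⟩
  · exact ⟨C.mset.inj hL, hGG⟩
  · exact absurd (hG _ (Multiset.mem_cons_self _ _)) (by simp [C.isMset])

theorem MEquiv.mset_cons_s13 {L₁ L₂ : List α} {G : Multiset (C α)} (hperm : L₁.Perm L₂)
    (hG : ∀ c ∈ G, c.isMset = false) :
    MEquiv (C.mset L₁ ::ₘ G) (C.mset L₂ ::ₘ G) := by
  simpa using MEquiv.step L₁ L₂ G G hperm (.base G hG)

theorem joinableMod_critical_pair (L : List α) (a b : α) {H : Multiset (C α)}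
    (hH : ∀ c ∈ H, c.isMset = false) :
    JoinableMod Step MEquiv (C.mset (a :: L) ::ₘ C.item b ::ₘ H)
      (C.mset (b :: L) ::ₘ C.item a ::ₘ H) :=
  ⟨_, _, .single (step_iff.mpr ⟨_, _, _, rfl, rfl⟩), .single (step_iff.mpr ⟨_, _, _, rfl, rfl⟩),
    MEquiv.mset_cons_s13 (.swap a b L) hH⟩

end MultisetItems

theorem alpha_property_multiset_items {α : Type*} (σ τ τ' : Multiset (C α))
    (hσ : SInv σ) (h1 : Step σ τ) (h2 : Step σ τ') :
    JoinableMod Step MEquiv τ τ' := by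
  obtain ⟨L, a, G, rfl, rfl⟩ := step_iff.mp h1
  obtain ⟨L', a', G', hσeq, rfl⟩ := step_iff.mp h2
  have hG := sInv_mset_cons_iff.mp hσ
  obtain ⟨rfl, hitems⟩ := mset_cons_inj_of_forall_isMset_eq_false hσeq hG
  have hG_items : ∀ c ∈ G, c.isMset = false := fun c hc => hG c (Multiset.mem_cons_of_mem hc)
  rcases Multiset.cons_eq_cons.mp hitems with ⟨ha, rfl⟩ | ⟨-, H, rfl, rfl⟩
  · obtain rfl := C.item.inj ha
    exact ⟨_, _, .refl, .refl, MEquiv.mset_cons_s13 (.refl _) hG_items⟩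
  · exact joinableMod_critical_pair L a a' fun c hc => hG_items c (Multiset.mem_cons_of_mem hc)
end

section
/- For the multi-set items rewrite system restricted to states with exactly one mset constraint: if σ and σ' are ≈-equivalent states each containing exactly one mset constraint and n item constraints, then any →-normal forms reachable from σ and σ' are ≈-equivalent. In particular, starting from {mset L} + {item a₁, …, item aₙ}, every normal form is {mset L'} where L' is a permutation of a₁ :: … :: aₙ :: L. -/
/-- A normal form has no successor. -/
def NormalForm {α : Type*} (σ : Multiset (C α)) : Prop := ¬ ∃ τ, Step σ τ

/-! Every step preserves the number of `mset` constraints and the total content (the items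
together with the entries of the lists), and `≈` preserves the content as well. A normal form with a
single `mset` constraint has no items left, so it is `{mset L'}` with `L'` carrying the whole content
of the start state; two such lists reached from `≈`-equivalent states therefore have equal
multisets, i.e. are permutations of each other. -/

section

variable {α : Type*}

def C.content : C α → Multiset α
  | .item a => {a}
  | .mset L => ↑L

def stateContent (σ : Multiset (C α)) : Multiset α :=
  (σ.map C.content).sum

def msetCount (σ : Multiset (C α)) : ℕ :=
  σ.countP (fun c => c.isMset = true)

@[simp] lemma stateContent_add (σ τ : Multiset (C α)) :
    stateContent (σ + τ) = stateContent σ + stateContent τ := by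
  simp [stateContent]

@[simp] lemma stateContent_singleton (c : C α) : stateContent {c} = c.content := by
  simp [stateContent]

@[simp] lemma stateContent_cons (c : C α) (σ : Multiset (C α)) :
    stateContent (c ::ₘ σ) = c.content + stateContent σ := by
  simp [stateContent]

@[simp] lemma stateContent_map_item (I : Multiset α) : stateContent (I.map C.item) = I := by
  simp [stateContent, Function.comp_def, C.content]

@[simp] lemma msetCount_cons (c : C α) (σ : Multiset (C α)) :
    msetCount (c ::ₘ σ) = msetCount σ + if c.isMset then 1 else 0 :=
  Multiset.countP_cons _ _ _

@[simp] lemma msetCount_map_item (I : Multiset α) : msetCount (I.map C.item) = 0 :=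
  Multiset.countP_eq_zero.mpr <| by simp [C.isMset]

lemma Relation.ReflTransGen.eq_of_invariant {β γ : Type*} {r : β → β → Prop} (f : β → γ)
    (hf : ∀ a b, r a b → f a = f b) {a b : β} (hab : Relation.ReflTransGen r a b) : f a = f b := by
  induction hab with
  | refl => rfl
  | tail _ hbc ih => exact ih.trans (hf _ _ hbc)

lemma Step.stateContent_eq {σ τ : Multiset (C α)} (h : Step σ τ) :
    stateContent σ = stateContent τ := by
  obtain ⟨L, a, G⟩ := h
  simp [C.content, ← Multiset.cons_coe]

lemma Step.msetCount_eq {σ τ : Multiset (C α)} (h : Step σ τ) : msetCount σ = msetCount τ := by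
  obtain ⟨L, a, G⟩ := h
  simp [C.isMset]

lemma MEquiv.stateContent_eq {σ τ : Multiset (C α)} (h : MEquiv σ τ) :
    stateContent σ = stateContent τ := by
  induction h with
  | base => rfl
  | step L₁ L₂ _ _ hperm _ ih => simp [ih, C.content, Multiset.coe_eq_coe.mpr hperm]
  | symm _ ih => exact ih.symm
  | trans _ _ ih₁ ih₂ => exact ih₁.trans ih₂

lemma NormalForm.eq_singleton_mset {τ : Multiset (C α)} (hn : NormalForm τ)
    (hc : msetCount τ = 1) : ∃ L, τ = {C.mset L} := by
  obtain ⟨c, hcτ, hc_mset⟩ : ∃ c ∈ τ, c.isMset = true :=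
    Multiset.countP_pos.mp (by rw [← msetCount, hc]; exact one_pos)
  obtain ⟨L, rfl⟩ : ∃ L, c = C.mset L := by
    cases c with
    | item => cases hc_mset
    | mset L => exact ⟨L, rfl⟩
  obtain ⟨G, rfl⟩ := Multiset.exists_cons_of_mem hcτ
  refine ⟨L, ?_⟩
  suffices G = 0 by simp [this]
  refine Multiset.eq_zero_of_forall_notMem fun d hd => ?_
  cases d with
  | item a =>
    obtain ⟨G', rfl⟩ := Multiset.exists_cons_of_mem hd
    exact hn ⟨_, by simpa using Step.rule L a G'⟩
  | mset M =>
    have : 0 < msetCount G := Multiset.countP_pos_of_mem hd rfl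
    simp [C.isMset] at hc
    omega

lemma NormalForm.exists_eq_mset_of_reflTransGen {σ τ : Multiset (C α)} (hc : msetCount σ = 1)
    (hr : Relation.ReflTransGen Step σ τ) (hn : NormalForm τ) :
    ∃ L', τ = {C.mset L'} ∧ (↑L' : Multiset α) = stateContent σ := by
  obtain ⟨L', rfl⟩ := hn.eq_singleton_mset <|
    (hr.eq_of_invariant msetCount fun _ _ h => h.msetCount_eq) ▸ hc
  exact ⟨L', rfl, by simpa [C.content] using
    (hr.eq_of_invariant stateContent fun _ _ h => h.stateContent_eq).symm⟩

end

theorem normal_forms_equivalent {α : Type*} :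
    (∀ σ σ' τ τ' : Multiset (C α), MEquiv σ σ' →
      Multiset.countP (fun c => c.isMset = true) σ = 1 →
      Multiset.countP (fun c => c.isMset = true) σ' = 1 →
      Relation.ReflTransGen Step σ τ → Relation.ReflTransGen Step σ' τ' →
      NormalForm τ → NormalForm τ' → MEquiv τ τ') ∧
    (∀ (L : List α) (I : Multiset α) (τ : Multiset (C α)),
      Relation.ReflTransGen Step ({C.mset L} + I.map C.item) τ → NormalForm τ →
      ∃ L' : List α, τ = {C.mset L'} ∧ (↑L' : Multiset α) = I + ↑L) := by
  refine ⟨fun σ σ' τ τ' heq hc hc' hr hr' hn hn' => ?_, fun L I τ hr hn => ?_⟩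
  · obtain ⟨M, rfl, hM⟩ := NormalForm.exists_eq_mset_of_reflTransGen hc hr hn
    obtain ⟨M', rfl, hM'⟩ := NormalForm.exists_eq_mset_of_reflTransGen hc' hr' hn'
    have hperm : M.Perm M' := Multiset.coe_eq_coe.mp (by rw [hM, hM', heq.stateContent_eq])
    simpa using MEquiv.step M M' 0 0 hperm (.base 0 (by simp))
  · have hc : msetCount ({C.mset L} + I.map C.item) = 1 := by simp [C.isMset]
    obtain ⟨L', rfl, hL'⟩ := NormalForm.exists_eq_mset_of_reflTransGen hc hr hn
    exact ⟨L', rfl, by simpa [C.content, add_comm] using hL'⟩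
end

section
/- There exists an equivalence relation on finite multisets over a two-element constraint alphabet {c, d} that is a congruence with respect to multiset union but does not have the split property: namely, the smallest equivalence ≈ with σ ≈ σ (equality) and ({c, c} + G) ≈ ({d} + G') whenever G ≈ G'. For this relation, {c, c} ≈ {d}, and {c, c} = {c} + {c}, but there do not exist H₁, H₂ with {d} = H₁ + H₂, {c} ≈ H₁ and {c} ≈ H₂. -/
/-!
Adding a common multiset to both sides commutes with every constructor of `E16`, which gives the
congruence. The weight `c ↦ 1`, `d ↦ 2`, extended additively, is invariant under `E16`, since the
rule trades `{c, c}` for `{d}`. A split `{d} = H₁ + H₂` has `H₁ ∈ {0, {d}}`, of weight `0` or `2`,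
so neither part is equivalent to `{c}`, of weight `1`.
-/

inductive C2 where
  | c : C2
  | d : C2

/-- Smallest equivalence with `σ ≈ σ` and `{c,c} + G ≈ {d} + G'` whenever `G ≈ G'`. -/
inductive E16 : Multiset C2 → Multiset C2 → Prop
  | refl (G : Multiset C2) : E16 G G
  | rule (G G' : Multiset C2) (h : E16 G G') :
      E16 (({C2.c, C2.c} : Multiset C2) + G) (({C2.d} : Multiset C2) + G')
  | symm {G H : Multiset C2} : E16 G H → E16 H G
  | trans {G H K : Multiset C2} : E16 G H → E16 H K → E16 G K

def C2.weight : C2 → ℕ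
  | C2.c => 1
  | C2.d => 2

def Multiset.c2Weight : Multiset C2 →+ ℕ :=
  Multiset.sumAddMonoidHom.comp (Multiset.mapAddMonoidHom C2.weight)

namespace E16

theorem add_right {G G' : Multiset C2} (h : E16 G G') (K : Multiset C2) :
    E16 (G + K) (G' + K) := by
  induction h with
  | refl G => exact refl _
  | rule G G' _ ih => simpa only [add_assoc] using rule _ _ ih
  | symm _ ih => exact symm ih
  | trans _ _ ih₁ ih₂ => exact trans ih₁ ih₂

theorem add {x x' y y' : Multiset C2} (hx : E16 x x') (hy : E16 y y') :
    E16 (x + y) (x' + y') :=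
  trans (hx.add_right y) (by simpa only [add_comm x'] using hy.add_right x')

theorem pair_c_d : E16 {C2.c, C2.c} {C2.d} := by
  simpa using rule 0 0 (refl 0)

theorem map_eq {M : Type*} [AddZeroClass M] (f : Multiset C2 →+ M)
    (hf : f {C2.c, C2.c} = f {C2.d}) {G H : Multiset C2} (h : E16 G H) : f G = f H := by
  induction h with
  | refl G => rfl
  | rule G G' _ ih => rw [map_add, map_add, hf, ih]
  | symm _ ih => exact ih.symm
  | trans _ _ ih₁ ih₂ => exact ih₁.trans ih₂

theorem c2Weight_eq {G H : Multiset C2} (h : E16 G H) : G.c2Weight = H.c2Weight :=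
  map_eq _ rfl h

theorem not_singleton_c_of_le_singleton_d {H : Multiset C2} (hH : H ≤ {C2.d}) :
    ¬ E16 {C2.c} H := by
  intro h
  have hw := c2Weight_eq h
  rcases Multiset.le_singleton.mp hH with rfl | rfl <;> simp [Multiset.c2Weight, C2.weight] at hw

end E16

theorem congruence_without_split :
    (∀ x x' y y' : Multiset C2, E16 x x' → E16 y y' → E16 (x + y) (x' + y')) ∧
    E16 ({C2.c, C2.c} : Multiset C2) ({C2.d} : Multiset C2) ∧
    ({C2.c, C2.c} : Multiset C2) = ({C2.c} : Multiset C2) + ({C2.c} : Multiset C2) ∧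
    ¬ ∃ H₁ H₂ : Multiset C2, ({C2.d} : Multiset C2) = H₁ + H₂ ∧
        E16 ({C2.c} : Multiset C2) H₁ ∧ E16 ({C2.c} : Multiset C2) H₂ := by
  refine ⟨fun _ _ _ _ => E16.add, E16.pair_c_d, rfl, ?_⟩
  rintro ⟨H₁, H₂, hsplit, h₁, -⟩
  exact E16.not_singleton_c_of_le_singleton_d (hsplit ▸ Multiset.le_add_right H₁ H₂) h₁
end
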